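/- Fix σ > 0 and define F_σ : [−1,1] → [−1,1] by F_σ(x) = B(x)/√( B(x)² + A(x) ) where B(x) = 1 − 2Q(x/σ) + (2σx/√(2π)) e^{−x²/(2σ²)} and A(x) = (2σ²(1−x²)/π) e^{−x²/σ²}. Then: (i) F_σ is odd, i.e. F_σ(−x) = −F_σ(x); (ii) for every x ∈ [0,1], x ≤ F_σ(x) ≤ 1, and for every x ∈ [−1,0], −1 ≤ F_σ(x) ≤ x; (iii) consequently the iterates F_σ^{(t)} (with F_σ^{(0)}(x) = x and F_σ^{(t+1)} = F_σ ∘ F_σ^{(t)}) satisfy F_σ^{(t+1)}(x) ≥ F_σ^{(t)}(x) for all x ∈ [0,1] and all t ≥ 0, and F_σ^{(t+1)}(x) ≤ F_σ^{(t)}(x) for all x ∈ [−1,0] and all t ≥ 0. -/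

import Mathlib

open MeasureTheory ProbabilityTheory Real
open scoped ENNReal NNReal

/-- The standard normal CDF Φ. -/
noncomputable def stdPhi (x : ℝ) : ℝ := (gaussianReal 0 1 (Set.Iic x)).toReal

/-- Q = 1 - Φ. -/
noncomputable def stdQ (x : ℝ) : ℝ := 1 - stdPhi x

/-- Euclidean dot product on `Fin d → ℝ`. -/
def dotp {d : ℕ} (a b : Fin d → ℝ) : ℝ := ∑ i, a i * b i

/-- Isotropic Gaussian `N(m, v I_d)` on `Fin d → ℝ` (v is the variance). -/
noncomputable def gaussPi (d : ℕ) (m : Fin d → ℝ) (v : ℝ) : Measure (Fin d → ℝ) :=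
  Measure.pi fun i => gaussianReal (m i) (Real.toNNReal v)

/-- Joint law of `(X, Y)` for the binary Gaussian mixture model bGMM(μ, σ):
`Y` uniform on `{-1, 1}` and `X | Y ∼ N(Yμ, σ² I_d)`. -/
noncomputable def bGMM (d : ℕ) (m : Fin d → ℝ) (σ : ℝ) : Measure ((Fin d → ℝ) × ℝ) :=
  (1/2 : ℝ≥0∞) • (gaussPi d m (σ^2)).map (fun x => (x, (1:ℝ)))
    + (1/2 : ℝ≥0∞) • (gaussPi d (-m) (σ^2)).map (fun x => (x, (-1:ℝ)))

/-- The marginal mixture `p_μ = ½ N(μ, σ² I_d) + ½ N(-μ, σ² I_d)`. -/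
noncomputable def gmix (d : ℕ) (m : Fin d → ℝ) (σ : ℝ) : Measure (Fin d → ℝ) :=
  (1/2 : ℝ≥0∞) • gaussPi d m (σ^2) + (1/2 : ℝ≥0∞) • gaussPi d (-m) (σ^2)

/-- Sign function with values in `{-1, 1}`. -/
noncomputable def sgn (u : ℝ) : ℝ := if 0 < u then 1 else -1

/-- `B(x) = 1 − 2Q(x/σ) + (2σx/√(2π)) e^{−x²/(2σ²)}`. -/
noncomputable def Bfun (σ x : ℝ) : ℝ :=
  1 - 2 * stdQ (x/σ) + (2*σ*x/Real.sqrt (2*π)) * Real.exp (-x^2/(2*σ^2))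

/-- `A(x) = (2σ²(1−x²)/π) e^{−x²/σ²}`. -/
noncomputable def Afun (σ x : ℝ) : ℝ := (2*σ^2*(1-x^2)/π) * Real.exp (-x^2/σ^2)

/-- The correlation evolution function `F_σ(x) = B(x)/√(B(x)² + A(x))`. -/
noncomputable def Fsig (σ x : ℝ) : ℝ := Bfun σ x / Real.sqrt ((Bfun σ x)^2 + Afun σ x)

/-!
Write `B = 2Φ(x/σ) − 1 + C` with `C = (2σx/√(2π)) e^{−x²/(2σ²)}`, and put `K = (2σ²/π) e^{−x²/σ²}`,
so that `C² = x² K` and `A = (1 − x²) K`. For `x ∈ [0,1]` we have `Φ(x/σ) ≥ 1/2`, hence `0 ≤ C ≤ B` and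
`x² (B² + A) = x² B² + (1 − x²) C² ≤ B²`, which is `x ≤ F_σ(x)`; `F_σ ≤ 1` because `A ≥ 0`.
The symmetry `Φ(−u) = 1 − Φ(u)` makes `F_σ` odd, which carries this over to `[−1,0]`. Since `F_σ` then
maps `[0,1]` and `[−1,0]` into themselves, the iterates move monotonically in `t`.
-/

lemma div_sqrt_sq_add_le_one {A B : ℝ} (hA : 0 ≤ A) : B / √(B ^ 2 + A) ≤ 1 :=
  div_le_one_of_le₀ ((le_abs_self B).trans (Real.abs_le_sqrt (by linarith))) (Real.sqrt_nonneg _)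

lemma le_div_sqrt_sq_add {x B c K : ℝ} (hx : x ∈ Set.Icc (0 : ℝ) 1) (hc : 0 ≤ c) (hcB : c ≤ B)
    (hcK : c ^ 2 = x ^ 2 * K) (hK : 0 < K) : x ≤ B / √(B ^ 2 + (1 - x ^ 2) * K) := by
  obtain ⟨hx0, hx1⟩ := hx
  have hx2 : 0 ≤ 1 - x ^ 2 := by nlinarith
  have hcB2 : c ^ 2 ≤ B ^ 2 := pow_le_pow_left₀ hc hcB 2
  have hS : 0 < √(B ^ 2 + (1 - x ^ 2) * K) := Real.sqrt_pos.mpr (by nlinarith)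
  rw [le_div_iff₀ hS]
  calc x * √(B ^ 2 + (1 - x ^ 2) * K) = √(x ^ 2 * B ^ 2 + (1 - x ^ 2) * c ^ 2) := by
        rw [← Real.sqrt_sq hx0, ← Real.sqrt_mul (sq_nonneg x), Real.sqrt_sq hx0, hcK]
        ring_nf
    _ ≤ √(B ^ 2) := Real.sqrt_le_sqrt (by nlinarith)
    _ = B := Real.sqrt_sq (hc.trans hcB)

lemma iterate_le_iterate_succ_of_mapsTo {α : Type*} [Preorder α] {f : α → α} {s : Set α}
    (hf : Set.MapsTo f s s) (hle : ∀ x ∈ s, x ≤ f x) {x : α} (hx : x ∈ s) (t : ℕ) :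
    f^[t] x ≤ f^[t + 1] x := by
  rw [Function.iterate_succ_apply']
  exact hle _ (hf.iterate t hx)

lemma stdPhi_neg (x : ℝ) : stdPhi (-x) = 1 - stdPhi x := by
  have hsymm : gaussianReal 0 1 (Set.Iic (-x)) = gaussianReal 0 1 (Set.Ici x) := by
    have hmap : (gaussianReal 0 1).map (fun y => -y) = gaussianReal 0 1 := by
      simpa using gaussianReal_map_neg (μ := 0) (v := 1)
    conv_lhs => rw [← hmap, Measure.map_apply measurable_neg measurableSet_Iic]
    rw [Set.neg_preimage, Set.neg_Iic, neg_neg]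
  have hatom : gaussianReal 0 1 {x} = 0 :=
    gaussianReal_absolutelyContinuous 0 one_ne_zero (measure_singleton x)
  rw [stdPhi, stdPhi, hsymm, ← measure_congr (Ioi_ae_eq_Ici' hatom), ← Set.compl_Iic,
    ← measureReal_def, ← measureReal_def, probReal_compl_eq_one_sub measurableSet_Iic]

lemma stdPhi_mono : Monotone stdPhi := fun _ _ hab =>
  ENNReal.toReal_mono (measure_ne_top _ _) (measure_mono (Set.Iic_subset_Iic.mpr hab))

lemma one_half_le_stdPhi {x : ℝ} (hx : 0 ≤ x) : 1 / 2 ≤ stdPhi x := by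
  have hzero : stdPhi 0 = 1 / 2 := by linarith [neg_zero (G := ℝ) ▸ stdPhi_neg 0]
  exact hzero ▸ stdPhi_mono hx

lemma Bfun_neg (σ x : ℝ) : Bfun σ (-x) = -Bfun σ x := by
  simp only [Bfun, stdQ, neg_div, stdPhi_neg, neg_sq]
  ring

lemma Afun_neg (σ x : ℝ) : Afun σ (-x) = Afun σ x := by
  simp only [Afun, neg_sq]

lemma Fsig_neg (σ x : ℝ) : Fsig σ (-x) = -Fsig σ x := by
  rw [Fsig, Fsig, Bfun_neg, Afun_neg, neg_sq, neg_div]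

noncomputable def Cfun (σ x : ℝ) : ℝ := 2 * σ * x / √(2 * π) * rexp (-x ^ 2 / (2 * σ ^ 2))

noncomputable def Kfun (σ x : ℝ) : ℝ := 2 * σ ^ 2 / π * rexp (-x ^ 2 / σ ^ 2)

lemma Bfun_eq (σ x : ℝ) : Bfun σ x = 2 * stdPhi (x / σ) - 1 + Cfun σ x := by
  rw [Bfun, stdQ, Cfun]
  ring

lemma Afun_eq (σ x : ℝ) : Afun σ x = (1 - x ^ 2) * Kfun σ x := by
  rw [Afun, Kfun]
  ring

lemma Cfun_sq (σ x : ℝ) : Cfun σ x ^ 2 = x ^ 2 * Kfun σ x := by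
  have hsqrt : √(2 * π) ^ 2 = 2 * π := Real.sq_sqrt (by positivity)
  have hexp : rexp (-x ^ 2 / (2 * σ ^ 2)) ^ 2 = rexp (-x ^ 2 / σ ^ 2) := by
    rw [← Real.exp_nat_mul]
    ring_nf
  rw [Cfun, Kfun, mul_pow, div_pow, hsqrt, hexp]
  field_simp

lemma Cfun_nonneg {σ x : ℝ} (hσ : 0 ≤ σ) (hx : 0 ≤ x) : 0 ≤ Cfun σ x := by
  unfold Cfun
  positivity

lemma Cfun_le_Bfun {σ x : ℝ} (hσ : 0 ≤ σ) (hx : 0 ≤ x) : Cfun σ x ≤ Bfun σ x := by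
  rw [Bfun_eq]
  linarith [one_half_le_stdPhi (div_nonneg hx hσ)]

lemma Kfun_pos {σ : ℝ} (hσ : σ ≠ 0) (x : ℝ) : 0 < Kfun σ x := by
  unfold Kfun
  positivity

lemma Afun_nonneg {σ x : ℝ} (hx : x ∈ Set.Icc (-1 : ℝ) 1) : 0 ≤ Afun σ x := by
  have hx2 : 0 ≤ 1 - x ^ 2 := by nlinarith [hx.1, hx.2]
  unfold Afun
  positivity

lemma le_Fsig_le_one {σ x : ℝ} (hσ : 0 < σ) (hx : x ∈ Set.Icc (0 : ℝ) 1) :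
    x ≤ Fsig σ x ∧ Fsig σ x ≤ 1 := by
  refine ⟨?_, div_sqrt_sq_add_le_one (Afun_nonneg ⟨by linarith [hx.1], hx.2⟩)⟩
  rw [Fsig, Afun_eq]
  exact le_div_sqrt_sq_add hx (Cfun_nonneg hσ.le hx.1) (Cfun_le_Bfun hσ.le hx.1) (Cfun_sq σ x)
    (Kfun_pos hσ.ne' x)

lemma neg_one_le_Fsig_le {σ x : ℝ} (hσ : 0 < σ) (hx : x ∈ Set.Icc (-1 : ℝ) 0) :
    -1 ≤ Fsig σ x ∧ Fsig σ x ≤ x := by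
  have h := le_Fsig_le_one hσ (x := -x) ⟨by linarith [hx.2], by linarith [hx.1]⟩
  rw [Fsig_neg] at h
  constructor <;> linarith [h.1, h.2]

/-- properties of `F_σ`: (i) odd; (ii) `x ≤ F_σ(x) ≤ 1` on `[0,1]` and
`−1 ≤ F_σ(x) ≤ x` on `[−1,0]`; (iii) the iterates are monotone in `t` pointwise, increasing
on `[0,1]` and decreasing on `[−1,0]`. -/
theorem stmt19 (σ : ℝ) (hσ : 0 < σ) :
    (∀ x ∈ Set.Icc (-1:ℝ) 1, Fsig σ (-x) = -(Fsig σ x)) ∧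
    (∀ x ∈ Set.Icc (0:ℝ) 1, x ≤ Fsig σ x ∧ Fsig σ x ≤ 1) ∧
    (∀ x ∈ Set.Icc (-1:ℝ) 0, -1 ≤ Fsig σ x ∧ Fsig σ x ≤ x) ∧
    (∀ x ∈ Set.Icc (0:ℝ) 1, ∀ t : ℕ, (Fsig σ)^[t] x ≤ (Fsig σ)^[t+1] x) ∧
    (∀ x ∈ Set.Icc (-1:ℝ) 0, ∀ t : ℕ, (Fsig σ)^[t+1] x ≤ (Fsig σ)^[t] x) := by
  have hpos := fun x (hx : x ∈ Set.Icc (0 : ℝ) 1) => le_Fsig_le_one hσ hx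
  have hneg := fun x (hx : x ∈ Set.Icc (-1 : ℝ) 0) => neg_one_le_Fsig_le hσ hx
  have hmaps_pos : Set.MapsTo (Fsig σ) (Set.Icc 0 1) (Set.Icc 0 1) :=
    fun x hx => ⟨hx.1.trans (hpos x hx).1, (hpos x hx).2⟩
  have hmaps_neg : Set.MapsTo (Fsig σ) (Set.Icc (-1) 0) (Set.Icc (-1) 0) :=
    fun x hx => ⟨(hneg x hx).1, (hneg x hx).2.trans hx.2⟩
  refine ⟨fun x _ => Fsig_neg σ x, hpos, hneg, fun x hx t => ?_, fun x hx t => ?_⟩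
  · exact iterate_le_iterate_succ_of_mapsTo hmaps_pos (fun y hy => (hpos y hy).1) hx t
  -- in `ℝᵒᵈ` the bound `F_σ(x) ≤ x` on `[−1,0]` reads `x ≤ F_σ(x)`
  · exact iterate_le_iterate_succ_of_mapsTo (α := ℝᵒᵈ) hmaps_neg (fun y hy => (hneg y hy).2) hx t
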